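/- arXiv:2407.18781 — 3 statements merged into one kernel-verified Lean document; each statement's English description precedes it below -/
import Mathlib

section
/- Under Assumption (A), for every δ > 0 the ν-measure of each δ-slice of C is uniformly bounded away from zero: η(δ) := inf{ ν(S_{a,δ}) : a ∈ S^{d−1} } > 0. -/
open MeasureTheory ProbabilityTheory Filter Set
open scoped ENNReal InnerProductSpace Topology

noncomputable section

abbrev Ed (d : ℕ) : Type := EuclideanSpace ℝ (Fin d)

section Defs

variable {E : Type*} [NormedAddCommGroup E] [InnerProductSpace ℝ E] [CompleteSpace E]
  [MeasurableSpace E] [BorelSpace E] [SecondCountableTopology E]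
variable {Ω : Type*} [MeasurableSpace Ω]

/-- The (topological) support of a measure. -/
def msupport (ρ : Measure E) : Set E :=
  {x | ∀ U : Set E, IsOpen U → x ∈ U → 0 < ρ U}

/-- `ρ` has a finite second moment, i.e. `ρ ∈ 𝒫₂`. -/
def FiniteSecondMoment (ρ : Measure E) : Prop :=
  ∫⁻ x, (‖x‖₊ : ℝ≥0∞) ^ 2 ∂ρ < ⊤

/-- `ρ` has a finite first moment, i.e. `ρ ∈ 𝒫₁`. -/
def FiniteFirstMoment (ρ : Measure E) : Prop :=
  ∫⁻ x, (‖x‖₊ : ℝ≥0∞) ∂ρ < ⊤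

/-- Convex order `μ ≤_cx ν`: `∫ φ dμ ≤ ∫ φ dν` for all (integrable) convex `φ`. -/
def ConvexOrder (μ ν : Measure E) : Prop :=
  ∀ φ : E → ℝ, ConvexOn ℝ Set.univ φ → Integrable φ μ → Integrable φ ν →
    ∫ x, φ x ∂μ ≤ ∫ x, φ x ∂ν

/-- There is a martingale `(M_t)_{0 ≤ t ≤ 1}` with `M_0 ∼ μ`, `M_1 ∼ ν` and
`P(M_0 ∈ A, M_1 ∈ B) > 0`. -/
def ExistsMartingaleHitting (μ ν : Measure E) (A B : Set E) : Prop :=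
  ∃ (Ω' : Type) (mΩ' : MeasurableSpace Ω'),
    letI : MeasurableSpace Ω' := mΩ'
    ∃ (P' : Measure Ω') (ℱ : Filtration ℝ mΩ') (M : ℝ → Ω' → E),
      IsProbabilityMeasure P' ∧ Martingale M ℱ P' ∧
      P'.map (M 0) = μ ∧ P'.map (M 1) = ν ∧
      0 < P' {ω | M 0 ω ∈ A ∧ M 1 ω ∈ B}

/-- The pair `(μ, ν)` is irreducible. -/
def IrreduciblePair (μ ν : Measure E) : Prop :=
  ∀ A B : Set E, MeasurableSet A → MeasurableSet B → 0 < μ A → 0 < ν B →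
    ExistsMartingaleHitting μ ν A B

/-- Assumption (A): convex order, irreducibility, `C := conv(supp ν)` compact,
and `supp μ` contained in the interior of `C`. -/
structure AssumptionA (μ ν : Measure E) : Prop where
  cx : ConvexOrder μ ν
  irr : IrreduciblePair μ ν
  cptC : IsCompact (convexHull ℝ (msupport ν))
  suppInt : msupport μ ⊆ interior (convexHull ℝ (msupport ν))

/-- Maximal covariance `MCov(p₁, p₂) = sup_{q ∈ Cpl(p₁,p₂)} ∫ ⟨x₁, x₂⟩ q(dx₁,dx₂)`. -/
def MCov (p₁ p₂ : Measure E) : ℝ :=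
  ⨆ q : {q : Measure (E × E) // q.map Prod.fst = p₁ ∧ q.map Prod.snd = p₂},
    ∫ x : E × E, ⟪x.1, x.2⟫_ℝ ∂(q.1)

/-- Convolution of the measure `α` with the measure `γ`. -/
def mconvol (α γ : Measure E) : Measure E :=
  (α.prod γ).map fun p => p.1 + p.2

/-- The Bass functional `𝒱(α) = MCov(α ∗ γ, ν) − MCov(α, μ)`. -/
def calV (γ μ ν : Measure E) (α : Measure E) : ℝ :=
  MCov (mconvol α γ) ν - MCov α μ

/-- The sigma-algebra generated by a random variable. -/
def sigmaGen {F : Type*} [MeasurableSpace F] (X : Ω → F) : MeasurableSpace Ω :=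
  MeasurableSpace.comap X inferInstance

/-- `Z ∈ L²(m)`: `m`-measurable and square-integrable. -/
def MemL2Meas {Ω' : Type*} {mΩ' : MeasurableSpace Ω'} (P : @Measure Ω' mΩ')
    (m : MeasurableSpace Ω') (Z : Ω' → E) : Prop :=
  Measurable[m] Z ∧ MemLp Z 2 P

/-- The lifted Bass functional `V(Z) = sup { E[(Z+Γ)·Y − Z·X] : Y ∈ L²(ℋ), Y ∼ ν }`,
where `ℋ = σ(X, Γ)`. -/
def bassV (P : Measure Ω) (ν : Measure E) (X Γ : Ω → E) (Z : Ω → E) : ℝ :=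
  ⨆ Y : {Y : Ω → E // Measurable[sigmaGen X ⊔ sigmaGen Γ] Y ∧ MemLp Y 2 P ∧ P.map Y = ν},
    ∫ ω, (⟪Z ω + Γ ω, Y.1 ω⟫_ℝ - ⟪Z ω, X ω⟫_ℝ) ∂P

/-- `T` is the Brenier map from `ρ` to `η`: an a.e. gradient of a convex function pushing
`ρ` forward to `η`. -/
def IsBrenierMap (ρ η : Measure E) (T : E → E) : Prop :=
  Measurable T ∧ ρ.map T = η ∧
    ∃ v : E → ℝ, ConvexOn ℝ Set.univ v ∧ ∀ᵐ x ∂ρ, HasGradientAt v (T x) x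

/-- Convolution `(f ∗ γ)(z) = ∫ f (z + y) γ(dy)` of a map with a measure. -/
def gconv (γ : Measure E) (f : E → E) (z : E) : E :=
  ∫ y, f (z + y) ∂γ

/-- The standing probabilistic setup: `P` a probability measure carrying independent
random variables `X ∼ μ` and `Γ ∼ γ`, with `μ, ν ∈ 𝒫₂`. -/
structure BassSetup (P : Measure Ω) (γ μ ν : Measure E) (X Γ : Ω → E) : Prop where
  prob : IsProbabilityMeasure P
  probν : IsProbabilityMeasure ν
  fin2ν : FiniteSecondMoment ν
  measX : Measurable X
  measΓ : Measurable Γ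
  indep : IndepFun X Γ P
  lawX : P.map X = μ
  lawΓ : P.map Γ = γ
  l2X : MemLp X 2 P

/-- `(X, Z)` is coupled monotonically: `E[⟨X, Z⟩] = MCov(law X, law Z)`. -/
def MonotoneCoupled (P : Measure Ω) (X Z : Ω → E) : Prop :=
  ∫ ω, ⟪X ω, Z ω⟫_ℝ ∂P = MCov (P.map X) (P.map Z)

/-- The `L²`-Bass gradient flow: an absolutely continuous curve `(ζ_t)_{t ≥ 0}` of
`σ(X)`-measurable elements of `L²` satisfying, for a.e. `t ≥ 0`,
`dζ_t/dt = −((∇v_t ∗ γ)(ζ_t) − X)`, where `∇v_t` is the Brenier map from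
`law(ζ_t) ∗ γ = law(ζ_t + Γ)` to `ν`. -/
def IsBassGradientFlow (P : Measure Ω) (γ ν : Measure E) (X Γ : Ω → E)
    (ζ : ℝ → Lp E 2 P) : Prop :=
  (∀ t : ℝ, 0 ≤ t → AEStronglyMeasurable[sigmaGen X] (ζ t : Ω → E) P) ∧
  ∃ g : ℝ → Lp E 2 P,
    (∀ t : ℝ, 0 ≤ t → ζ t = ζ 0 + ∫ s in (0:ℝ)..t, g s) ∧
    ∀ᵐ t ∂(volume.restrict (Set.Ioi (0:ℝ))),
      ∃ T : E → E,
        IsBrenierMap (P.map fun ω => (ζ t : Ω → E) ω + Γ ω) ν T ∧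
        (g t : Ω → E) =ᵐ[P] fun ω => X ω - gconv γ T ((ζ t : Ω → E) ω)

/-- `Z` minimizes the lifted Bass functional over `L²(σ(X))`. -/
def IsMinimizerV (P : Measure Ω) (ν : Measure E) (X Γ : Ω → E) (Z : Ω → E) : Prop :=
  ∀ W : Ω → E, MemL2Meas P (sigmaGen X) W → bassV P ν X Γ Z ≤ bassV P ν X Γ W

/-- The support function `ℓ(a) = sup { ⟨y, a⟩ : y ∈ C }` of a set `C`. -/
def suppFn (C : Set E) (a : E) : ℝ := sSup ((fun y => ⟪y, a⟫_ℝ) '' C)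

/-- The `δ`-slice `S_{a,δ} = { y ∈ C : ⟨y, a⟩ > ℓ(a) − δ }`. -/
def mslice (C : Set E) (a : E) (δ : ℝ) : Set E :=
  {y ∈ C | suppFn C a - δ < ⟪y, a⟫_ℝ}

/-- `Δ = inf { ℓ(a) − ⟨x, a⟩ : a ∈ S^{d−1}, x ∈ C_μ }`. -/
def bassDelta (μ ν : Measure E) : ℝ :=
  sInf {r : ℝ | ∃ a : E, ‖a‖ = 1 ∧ ∃ x ∈ convexHull ℝ (msupport μ),
    r = suppFn (convexHull ℝ (msupport ν)) a - ⟪x, a⟫_ℝ}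

/-- A tight family of measures. -/
def TightFamily (Λ : Set (Measure E)) : Prop :=
  ∀ ε : ℝ≥0∞, 0 < ε → ∃ K : Set E, IsCompact K ∧ ∀ β ∈ Λ, β Kᶜ ≤ ε

end Defs

/-- The standard Gaussian measure on `ℝ^d`. -/
def stdGaussian (d : ℕ) : Measure (Ed d) :=
  (Measure.pi fun _ : Fin d => gaussianReal 0 1).map
    (MeasurableEquiv.toLp 2 (Fin d → ℝ))

/-- Assumptions (A4)-(A5): `ν` is absolutely continuous with a density which is essentially
bounded away from `0` on `I = int C` and essentially bounded from above on `ℝ`. -/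
def NuDensityBounds (ν : Measure ℝ) : Prop :=
  ∃ f : ℝ → ℝ, Measurable f ∧ ν = volume.withDensity (fun x => ENNReal.ofReal (f x)) ∧
    (∃ c : ℝ, 0 < c ∧ ∀ᵐ x ∂(volume : Measure ℝ),
        x ∈ interior (convexHull ℝ (msupport ν)) → c ≤ f x) ∧
    (∃ Cb : ℝ, ∀ᵐ x ∂(volume : Measure ℝ), f x ≤ Cb)

/-!
Every unit vector `b` has a point of `supp ν` within `δ / 2` of the top of `C` in direction `b`,
so the slice `S_{b,δ/2}` has positive `ν`-measure. Since `C` is bounded, slices move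
Lipschitz-continuously with the direction, `S_{b,δ/2} ⊆ S_{a,δ}` for `a` close to `b`, and
compactness of the sphere turns these local lower bounds into a uniform one.
-/

theorem IsCompact.exists_gt_forall_le_of_eventually {X α : Type*} [TopologicalSpace X]
    [LinearOrder α] {K : Set X} (hK : IsCompact K) {f : X → α} {a : α} (ha : ¬IsMax a)
    (hf : ∀ x ∈ K, ∃ c > a, ∀ᶠ y in 𝓝 x, c ≤ f y) :
    ∃ c > a, ∀ y ∈ K, c ≤ f y := by
  refine hK.induction_on (p := fun s => ∃ c > a, ∀ y ∈ s, c ≤ f y) ?_ ?_ ?_ ?_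
  · obtain ⟨c, hc⟩ := not_isMax_iff.1 ha
    exact ⟨c, hc, fun _ h => h.elim⟩
  · rintro s t hst ⟨c, hc, hct⟩
    exact ⟨c, hc, fun y hy => hct y (hst hy)⟩
  · rintro s t ⟨c, hc, hcs⟩ ⟨c', hc', hct⟩
    refine ⟨min c c', lt_min hc hc', ?_⟩
    rintro y (hy | hy)
    · exact (min_le_left _ _).trans (hcs y hy)
    · exact (min_le_right _ _).trans (hct y hy)
  · intro x hx
    obtain ⟨c, hc, hcx⟩ := hf x hx
    exact ⟨{y | c ≤ f y}, mem_nhdsWithin_of_mem_nhds hcx, c, hc, fun _ hy => hy⟩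

section SupportFunction

variable {E : Type*} [NormedAddCommGroup E] [InnerProductSpace ℝ E] {C : Set E} {R : ℝ}

lemma bddAbove_inner_image_of_norm_le (hR : ∀ y ∈ C, ‖y‖ ≤ R) (a : E) :
    BddAbove ((fun y => ⟪y, a⟫_ℝ) '' C) := by
  refine ⟨R * ‖a‖, ?_⟩
  rintro _ ⟨y, hy, rfl⟩
  exact (real_inner_le_norm y a).trans (mul_le_mul_of_nonneg_right (hR y hy) (norm_nonneg a))

lemma inner_sub_le_of_norm_le (hR : ∀ y ∈ C, ‖y‖ ≤ R) {y : E} (hy : y ∈ C) (a b : E) :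
    ⟪y, a⟫_ℝ - ⟪y, b⟫_ℝ ≤ R * ‖a - b‖ := by
  rw [← inner_sub_right]
  exact (real_inner_le_norm y _).trans (mul_le_mul_of_nonneg_right (hR y hy) (norm_nonneg _))

lemma inner_le_suppFn (hR : ∀ y ∈ C, ‖y‖ ≤ R) {y : E} (hy : y ∈ C) (a : E) :
    ⟪y, a⟫_ℝ ≤ suppFn C a :=
  le_csSup (bddAbove_inner_image_of_norm_le hR a) ⟨y, hy, rfl⟩

lemma suppFn_le_add (hC : C.Nonempty) (hR : ∀ y ∈ C, ‖y‖ ≤ R) (a b : E) :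
    suppFn C a ≤ suppFn C b + R * ‖a - b‖ := by
  refine csSup_le (hC.image _) ?_
  rintro _ ⟨y, hy, rfl⟩
  linarith [inner_sub_le_of_norm_le hR hy a b, inner_le_suppFn hR hy b]

lemma mslice_subset_mslice (hC : C.Nonempty) (hR : ∀ y ∈ C, ‖y‖ ≤ R) {a b : E} {δ δ' : ℝ}
    (hab : 2 * R * ‖a - b‖ ≤ δ - δ') :
    mslice C b δ' ⊆ mslice C a δ := by
  rintro y ⟨hy, hyb⟩
  refine ⟨hy, ?_⟩
  have hy_ab : ⟪y, b⟫_ℝ - ⟪y, a⟫_ℝ ≤ R * ‖a - b‖ := by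
    simpa only [norm_sub_rev] using inner_sub_le_of_norm_le hR hy b a
  linarith [suppFn_le_add hC hR a b]

lemma exists_inner_gt_suppFn_convexHull_sub {S : Set E} (hS : S.Nonempty) (a : E) {ε : ℝ}
    (hε : 0 < ε) : ∃ y ∈ S, suppFn (convexHull ℝ S) a - ε < ⟪y, a⟫_ℝ := by
  by_contra! h
  have hhull : convexHull ℝ S ⊆ {w | ⟪w, a⟫_ℝ ≤ suppFn (convexHull ℝ S) a - ε} :=
    convexHull_min h (convex_halfSpace_le
      ⟨fun x y => inner_add_left x y a, fun c x => real_inner_smul_left x a c⟩ _)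
  have : suppFn (convexHull ℝ S) a ≤ suppFn (convexHull ℝ S) a - ε :=
    csSup_le ((hS.convexHull).image _) (by rintro _ ⟨w, hw, rfl⟩; exact hhull hw)
  linarith

end SupportFunction

lemma msupport_eq_support {E : Type*} [NormedAddCommGroup E] [MeasurableSpace E]
    (ρ : Measure E) : msupport ρ = ρ.support := by
  ext x
  rw [(nhds_basis_opens x).mem_measureSupport]
  exact ⟨fun hx U hU => hx U hU.2 hU.1, fun hx U hU hxU => hx U ⟨hxU, hU⟩⟩

section Slices

variable {E : Type*} [NormedAddCommGroup E] [InnerProductSpace ℝ E] [MeasurableSpace E]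
  [SecondCountableTopology E]

lemma measure_mslice_convexHull_msupport_pos (ν : Measure E)
    (hne : (msupport ν).Nonempty) {a : E} (ha : ‖a‖ ≤ 1) {δ : ℝ} (hδ : 0 < δ) :
    0 < ν (mslice (convexHull ℝ (msupport ν)) a δ) := by
  obtain ⟨y₀, hy₀, hy₀a⟩ := exists_inner_gt_suppFn_convexHull_sub hne a (half_pos hδ)
  have hball : Metric.ball y₀ (δ / 2) ∩ msupport ν ⊆ mslice (convexHull ℝ (msupport ν)) a δ := by
    rintro y ⟨hyb, hy⟩
    refine ⟨subset_convexHull ℝ _ hy, ?_⟩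
    have hclose : ⟪y₀, a⟫_ℝ - ⟪y, a⟫_ℝ < δ / 2 := by
      rw [← inner_sub_left]
      calc ⟪y₀ - y, a⟫_ℝ ≤ ‖y₀ - y‖ * ‖a‖ := real_inner_le_norm _ _
        _ ≤ ‖y₀ - y‖ := mul_le_of_le_one_right (norm_nonneg _) ha
        _ < δ / 2 := by rwa [← dist_eq_norm, dist_comm]
    linarith
  calc 0 < ν (Metric.ball y₀ (δ / 2)) :=
        hy₀ _ Metric.isOpen_ball (Metric.mem_ball_self (half_pos hδ))
    _ = ν (Metric.ball y₀ (δ / 2) ∩ msupport ν) := by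
      rw [measure_inter_conull (by rw [msupport_eq_support]; exact ν.measure_compl_support)]
    _ ≤ _ := measure_mono hball

end Slices

theorem statement11_general
    {d : ℕ} {μ ν : Measure (Ed d)}
    [IsProbabilityMeasure ν]
    (hA : AssumptionA μ ν) :
    ∀ δ : ℝ, 0 < δ → ∃ c : ℝ, 0 < c ∧ ∀ a : Ed d, ‖a‖ = 1 →
      ENNReal.ofReal c ≤ ν (mslice (convexHull ℝ (msupport ν)) a δ) := by
  intro δ hδ
  set C := convexHull ℝ (msupport ν)
  have hsupp : (msupport ν).Nonempty := by
    rw [msupport_eq_support]; exact ν.nonempty_support (IsProbabilityMeasure.ne_zero ν)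
  obtain ⟨R, hR0, hR⟩ := hA.cptC.isBounded.exists_pos_norm_le
  have hlocal : ∀ b ∈ Metric.sphere (0 : Ed d) 1,
      ∃ c > 0, ∀ᶠ a in 𝓝 b, c ≤ ν (mslice C a δ) := by
    intro b hb
    refine ⟨ν (mslice C b (δ / 2)), measure_mslice_convexHull_msupport_pos ν hsupp
      (mem_sphere_zero_iff_norm.1 hb).le (half_pos hδ), ?_⟩
    filter_upwards [Metric.ball_mem_nhds b (div_pos hδ (by positivity : 0 < 4 * R))] with a ha
    refine measure_mono (mslice_subset_mslice hsupp.convexHull hR ?_)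
    rw [Metric.mem_ball, dist_eq_norm, lt_div_iff₀ (by positivity)] at ha
    linarith
  obtain ⟨c, hc, hcle⟩ := (isCompact_sphere (0 : Ed d) 1).exists_gt_forall_le_of_eventually
    (not_isMax_iff.2 ⟨1, one_pos⟩) hlocal
  obtain ⟨r, -, hr, hrc⟩ := ENNReal.lt_iff_exists_real_btwn.1 hc
  exact ⟨r, ENNReal.ofReal_pos.1 hr, fun a ha =>
    hrc.le.trans (hcle a (mem_sphere_zero_iff_norm.2 ha))⟩

/-- Lemma 3.5 (iii) / `lem:S` (iii). Under Assumption (A), for every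
`δ > 0` the `ν`-measure of each `δ`-slice of `C` is uniformly bounded away from zero:
`η(δ) = inf { ν(S_{a,δ}) : a ∈ S^{d−1} } > 0`. -/
theorem statement11
    {d : ℕ} {μ ν : Measure (Ed d)}
    [IsProbabilityMeasure μ] [IsProbabilityMeasure ν]
    (hspan : affineSpan ℝ (convexHull ℝ (msupport ν)) = ⊤)
    (hA : AssumptionA μ ν) :
    ∀ δ : ℝ, 0 < δ → ∃ c : ℝ, 0 < c ∧ ∀ a : Ed d, ‖a‖ = 1 →
      ENNReal.ofReal c ≤ ν (mslice (convexHull ℝ (msupport ν)) a δ) :=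
  statement11_general hA

end
end

section
/- Let d = 1, let Z be 𝒢-measurable and ΔZ ∈ L¹(𝒢;ℝ). Then for γ₁-a.e. ζ, the conditional expectation satisfies E[ΔZ | Z + Γ = ζ] = E[φ₁(ζ − Z) ΔZ] / E[φ₁(ζ − Z)], where φ₁ is the standard Gaussian density. -/
open MeasureTheory ProbabilityTheory Filter Set
open scoped ENNReal InnerProductSpace Topology

noncomputable section

/-! Because `(Z, ΔZ)` is independent of `Γ ∼ γ₁`, the joint law of `((Z, ΔZ), Z + Γ)` has
density `φ₁(t - z)` with respect to `law(Z, ΔZ) ⊗ Lebesgue`. Testing the defining property of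
`h` against the events `{Z + Γ ∈ A}` therefore gives
`∫_A h(t) E[φ₁(t - Z)] dt = ∫_A E[φ₁(t - Z) ΔZ] dt` for every Borel set `A`, hence
`h · E[φ₁(· - Z)] = E[φ₁(· - Z) ΔZ]` Lebesgue-a.e.; and `E[φ₁(ζ - Z)] > 0` everywhere. -/

open scoped NNReal

theorem integrable_mul_of_integrable_withDensity_ofReal {β : Type*} [MeasurableSpace β]
    {μ : Measure β} {k G : β → ℝ} (hk : Measurable k) (hk0 : 0 ≤ k)
    (hG : Integrable G (μ.withDensity fun x => ENNReal.ofReal (k x))) :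
    Integrable (fun x => k x * G x) μ := by
  rw [integrable_withDensity_iff_integrable_smul' hk.ennreal_ofReal
    (ae_of_all _ fun _ => ENNReal.ofReal_lt_top)] at hG
  simpa only [ENNReal.toReal_ofReal (hk0 _), smul_eq_mul] using hG

theorem integral_withDensity_ofReal {β : Type*} [MeasurableSpace β]
    {μ : Measure β} {k : β → ℝ} (hk : Measurable k) (hk0 : 0 ≤ k) (G : β → ℝ) :
    ∫ x, G x ∂μ.withDensity (fun x => ENNReal.ofReal (k x)) = ∫ x, k x * G x ∂μ := by
  rw [integral_withDensity_eq_integral_toReal_smul hk.ennreal_ofReal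
    (ae_of_all _ fun _ => ENNReal.ofReal_lt_top)]
  simp only [ENNReal.toReal_ofReal (hk0 _), smul_eq_mul]

theorem setIntegral_comp_eq_of_condExp_comap_eq {Ω β E : Type*} [MeasurableSpace Ω]
    [MeasurableSpace β] [NormedAddCommGroup E] [NormedSpace ℝ E] [CompleteSpace E]
    {P : Measure Ω} [IsFiniteMeasure P] {S : Ω → β} (hS : Measurable S) {Y : Ω → E}
    (hY : Integrable Y P) {h : β → E}
    (hfact : P[Y|MeasurableSpace.comap S inferInstance] =ᵐ[P] fun ω => h (S ω))
    {A : Set β} (hA : MeasurableSet A) :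
    ∫ ω in S ⁻¹' A, h (S ω) ∂P = ∫ ω in S ⁻¹' A, Y ω ∂P := by
  rw [← setIntegral_condExp hS.comap_le hY ⟨A, hA, rfl⟩]
  exact setIntegral_congr_ae (hS hA) (hfact.mono fun ω hω _ => hω.symm)

theorem gaussianPDFReal_le (μ : ℝ) (v : ℝ≥0) (x : ℝ) :
    gaussianPDFReal μ v x ≤ (√(2 * Real.pi * v))⁻¹ := by
  rw [gaussianPDFReal]
  refine mul_le_of_le_one_right (by positivity) (Real.exp_le_one_iff.2 ?_)
  exact div_nonpos_of_nonpos_of_nonneg (neg_nonpos.2 (sq_nonneg _)) (by positivity)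

theorem integral_gaussianPDFReal_comp_pos {α : Type*} [MeasurableSpace α] {ρ : Measure α}
    [IsFiniteMeasure ρ] [NeZero ρ] {g : α → ℝ} (hg : Measurable g) (μ : ℝ) {v : ℝ≥0}
    (hv : v ≠ 0) : 0 < ∫ a, gaussianPDFReal μ v (g a) ∂ρ := by
  have hint : Integrable (fun a => gaussianPDFReal μ v (g a)) ρ :=
    .of_bound ((measurable_gaussianPDFReal μ v).comp hg).aestronglyMeasurable _
      (ae_of_all _ fun a => by
        rw [Real.norm_of_nonneg (gaussianPDFReal_nonneg _ _ _)]
        exact gaussianPDFReal_le _ _ _)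
  rw [integral_pos_iff_support_of_nonneg (fun _ => gaussianPDFReal_nonneg _ _ _) hint,
    Function.support_eq_univ fun a => (gaussianPDFReal_pos _ _ _ hv).ne']
  simp [NeZero.ne ρ]

theorem map_prod_add_gaussianReal {α : Type*} [MeasurableSpace α] (ρ : Measure α) [SFinite ρ]
    {f : α → ℝ} (hf : Measurable f) (m : ℝ) {v : ℝ≥0} (hv : v ≠ 0) :
    (ρ.prod (gaussianReal m v)).map (fun x => (x.1, f x.1 + x.2)) =
      (ρ.prod volume).withDensity (fun x => gaussianPDF m v (x.2 - f x.1)) := by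
  have hT : Measurable (fun x : α × ℝ => (x.1, f x.1 + x.2)) :=
    measurable_fst.prodMk ((hf.comp measurable_fst).add measurable_snd)
  have hφ : Measurable (fun x : α × ℝ => gaussianPDF m v (x.2 - f x.1)) :=
    (measurable_gaussianPDF m v).comp (measurable_snd.sub (hf.comp measurable_fst))
  ext s hs
  rw [Measure.map_apply hT hs, Measure.prod_apply (hT hs), withDensity_apply _ hs,
    ← lintegral_indicator hs, lintegral_prod _ (hφ.indicator hs).aemeasurable]
  refine lintegral_congr fun a => ?_
  have hsa : MeasurableSet (Prod.mk a ⁻¹' s) := measurable_prodMk_left hs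
  calc gaussianReal m v (Prod.mk a ⁻¹' ((fun x : α × ℝ => (x.1, f x.1 + x.2)) ⁻¹' s))
      = (gaussianReal m v).map (f a + ·) (Prod.mk a ⁻¹' s) := by
        rw [Measure.map_apply (measurable_const_add _) hsa]; rfl
    _ = ∫⁻ t in Prod.mk a ⁻¹' s, gaussianPDF m v (t - f a) := by
        rw [gaussianReal_map_const_add, gaussianReal_of_var_ne_zero _ hv, withDensity_apply _ hsa]
        simp only [gaussianPDF, gaussianPDFReal_sub]
    _ = ∫⁻ t, s.indicator (fun x => gaussianPDF m v (x.2 - f x.1)) (a, t) := by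
        rw [← lintegral_indicator hsa]; rfl

section GaussianNoise

variable {Ω α : Type*} [MeasurableSpace Ω] [MeasurableSpace α] {P : Measure Ω}
  [IsFiniteMeasure P] {V : Ω → α} {Γ : Ω → ℝ} {f : α → ℝ} {m : ℝ} {v : ℝ≥0}

theorem map_prod_add_of_indepFun_gaussianReal (hV : Measurable V) (hΓ : Measurable Γ)
    (hf : Measurable f) (hv : v ≠ 0) (hind : IndepFun V Γ P)
    (hlaw : P.map Γ = gaussianReal m v) :
    P.map (fun ω => (V ω, f (V ω) + Γ ω)) =
      ((P.map V).prod volume).withDensity (fun x => gaussianPDF m v (x.2 - f x.1)) := by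
  have hT : Measurable (fun x : α × ℝ => (x.1, f x.1 + x.2)) :=
    measurable_fst.prodMk ((hf.comp measurable_fst).add measurable_snd)
  rw [← map_prod_add_gaussianReal _ hf m hv, ← hlaw,
    ← (indepFun_iff_map_prod_eq_prod_map_map hV.aemeasurable hΓ.aemeasurable).mp hind,
    Measure.map_map hT (hV.prodMk hΓ)]
  rfl

theorem integrable_gaussianPDFReal_mul_of_indepFun (hV : Measurable V) (hΓ : Measurable Γ)
    (hf : Measurable f) (hv : v ≠ 0) (hind : IndepFun V Γ P)
    (hlaw : P.map Γ = gaussianReal m v) {G : α × ℝ → ℝ} (hGm : Measurable G)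
    (hG : Integrable (fun ω => G (V ω, f (V ω) + Γ ω)) P) :
    Integrable (fun x => gaussianPDFReal m v (x.2 - f x.1) * G x) ((P.map V).prod volume) := by
  have hW : Measurable fun ω => (V ω, f (V ω) + Γ ω) := hV.prodMk ((hf.comp hV).add hΓ)
  have hGW := (integrable_map_measure hGm.aestronglyMeasurable hW.aemeasurable).2 hG
  rw [map_prod_add_of_indepFun_gaussianReal hV hΓ hf hv hind hlaw] at hGW
  exact integrable_mul_of_integrable_withDensity_ofReal (by fun_prop)
    (fun _ => gaussianPDFReal_nonneg _ _ _) hGW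

theorem integrable_integral_gaussianPDFReal_mul (hV : Measurable V) (hΓ : Measurable Γ)
    (hf : Measurable f) (hv : v ≠ 0) (hind : IndepFun V Γ P)
    (hlaw : P.map Γ = gaussianReal m v) {G : α × ℝ → ℝ} (hGm : Measurable G)
    (hG : Integrable (fun ω => G (V ω, f (V ω) + Γ ω)) P) :
    Integrable (fun t => ∫ ω, gaussianPDFReal m v (t - f (V ω)) * G (V ω, t) ∂P) :=
  (integrable_gaussianPDFReal_mul_of_indepFun hV hΓ hf hv hind hlaw hGm hG).integral_prod_right
    |>.congr (ae_of_all _ fun _ => integral_map hV.aemeasurable (by fun_prop))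

theorem setIntegral_preimage_add_eq_integral_gaussianPDFReal_mul (hV : Measurable V)
    (hΓ : Measurable Γ) (hf : Measurable f) (hv : v ≠ 0) (hind : IndepFun V Γ P)
    (hlaw : P.map Γ = gaussianReal m v) {G : α × ℝ → ℝ} (hGm : Measurable G)
    (hG : Integrable (fun ω => G (V ω, f (V ω) + Γ ω)) P) {A : Set ℝ}
    (hA : MeasurableSet A) :
    ∫ ω in (fun ω => f (V ω) + Γ ω) ⁻¹' A, G (V ω, f (V ω) + Γ ω) ∂P =
      ∫ t in A, ∫ ω, gaussianPDFReal m v (t - f (V ω)) * G (V ω, t) ∂P := by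
  have hW : Measurable fun ω => (V ω, f (V ω) + Γ ω) := hV.prodMk ((hf.comp hV).add hΓ)
  have hpre : (fun ω => f (V ω) + Γ ω) ⁻¹' A =
      (fun ω => (V ω, f (V ω) + Γ ω)) ⁻¹' (univ ×ˢ A) := by
    ext; simp
  have hprod : Integrable (fun x => gaussianPDFReal m v (x.2 - f x.1) * G x)
      ((P.map V).prod (volume.restrict A)) := by
    rw [← Measure.restrict_univ (μ := P.map V), Measure.prod_restrict]
    exact (integrable_gaussianPDFReal_mul_of_indepFun hV hΓ hf hv hind hlaw hGm hG).integrableOn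
  calc ∫ ω in (fun ω => f (V ω) + Γ ω) ⁻¹' A, G (V ω, f (V ω) + Γ ω) ∂P
      = ∫ x in univ ×ˢ A, G x ∂(P.map fun ω => (V ω, f (V ω) + Γ ω)) := by
        rw [hpre, setIntegral_map (MeasurableSet.univ.prod hA) hGm.aestronglyMeasurable
          hW.aemeasurable]
    _ = ∫ x, gaussianPDFReal m v (x.2 - f x.1) * G x ∂((P.map V).prod (volume.restrict A)) := by
        rw [map_prod_add_of_indepFun_gaussianReal hV hΓ hf hv hind hlaw,
          restrict_withDensity (MeasurableSet.univ.prod hA), ← Measure.prod_restrict,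
          Measure.restrict_univ]
        exact integral_withDensity_ofReal (by fun_prop) (fun _ => gaussianPDFReal_nonneg _ _ _) _
    _ = ∫ t in A, ∫ a, gaussianPDFReal m v (t - f a) * G (a, t) ∂(P.map V) :=
        integral_prod_symm _ hprod
    _ = ∫ t in A, ∫ ω, gaussianPDFReal m v (t - f (V ω)) * G (V ω, t) ∂P := by
        congr 1 with t
        exact integral_map hV.aemeasurable (by fun_prop)

theorem integral_gaussianPDFReal_mul_ae_eq_of_setIntegral_preimage_eq (hV : Measurable V)
    (hΓ : Measurable Γ) (hf : Measurable f) (hv : v ≠ 0) (hind : IndepFun V Γ P)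
    (hlaw : P.map Γ = gaussianReal m v) {G₁ G₂ : α × ℝ → ℝ} (hG₁m : Measurable G₁)
    (hG₁ : Integrable (fun ω => G₁ (V ω, f (V ω) + Γ ω)) P) (hG₂m : Measurable G₂)
    (hG₂ : Integrable (fun ω => G₂ (V ω, f (V ω) + Γ ω)) P)
    (heq : ∀ A, MeasurableSet A →
      ∫ ω in (fun ω => f (V ω) + Γ ω) ⁻¹' A, G₁ (V ω, f (V ω) + Γ ω) ∂P =
        ∫ ω in (fun ω => f (V ω) + Γ ω) ⁻¹' A, G₂ (V ω, f (V ω) + Γ ω) ∂P) :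
    (fun t => ∫ ω, gaussianPDFReal m v (t - f (V ω)) * G₁ (V ω, t) ∂P) =ᵐ[volume]
      fun t => ∫ ω, gaussianPDFReal m v (t - f (V ω)) * G₂ (V ω, t) ∂P := by
  refine ae_eq_of_forall_setIntegral_eq_of_sigmaFinite
    (fun _ _ _ => (integrable_integral_gaussianPDFReal_mul hV hΓ hf hv hind hlaw hG₁m
      hG₁).integrableOn)
    (fun _ _ _ => (integrable_integral_gaussianPDFReal_mul hV hΓ hf hv hind hlaw hG₂m
      hG₂).integrableOn)
    fun A hA _ => ?_
  rw [← setIntegral_preimage_add_eq_integral_gaussianPDFReal_mul hV hΓ hf hv hind hlaw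
      hG₁m hG₁ hA,
    ← setIntegral_preimage_add_eq_integral_gaussianPDFReal_mul hV hΓ hf hv hind hlaw
      hG₂m hG₂ hA]
  exact heq A hA

end GaussianNoise

/-- Lemma 4.1 / `lem:conditional`. Let `d = 1`, let `Z` be
`𝒢`-measurable and `ΔZ ∈ L¹(𝒢; ℝ)`. Then for `γ₁`-a.e. `ζ`,
`E[ΔZ | Z + Γ = ζ] = E[φ₁(ζ − Z) ΔZ] / E[φ₁(ζ − Z)]`. -/
theorem statement16
    {Ω : Type*} [MeasurableSpace Ω] {P : Measure Ω} [IsProbabilityMeasure P]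
    (X Γ : Ω → ℝ) (hX : Measurable X) (hΓ : Measurable Γ)
    (hlawΓ : P.map Γ = gaussianReal 0 1)
    (hindep : IndepFun X Γ P)
    (Z dZ : Ω → ℝ)
    (hZ : Measurable[sigmaGen X] Z)
    (hdZ : Measurable[sigmaGen X] dZ) (hdZint : Integrable dZ P)
    -- `h` is a factorization of the conditional expectation `E[ΔZ | Z + Γ]` through `Z + Γ`
    (h : ℝ → ℝ) (hh : Measurable h)
    (hfact : P[dZ|sigmaGen (fun ω => Z ω + Γ ω)] =ᵐ[P] fun ω => h (Z ω + Γ ω)) :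
    ∀ᵐ ζ ∂(gaussianReal 0 1),
      h ζ = (∫ ω, gaussianPDFReal 0 1 (ζ - Z ω) * dZ ω ∂P) /
        (∫ ω, gaussianPDFReal 0 1 (ζ - Z ω) ∂P) := by
  have hZm : Measurable Z := hZ.mono hX.comap_le le_rfl
  have hV : Measurable fun ω => (Z ω, dZ ω) := hZm.prodMk (hdZ.mono hX.comap_le le_rfl)
  have hind : IndepFun (fun ω => (Z ω, dZ ω)) Γ P :=
    indep_of_indep_of_le_left hindep (hZ.prodMk hdZ).comap_le
  have hae : (fun ζ => ∫ ω, gaussianPDFReal 0 1 (ζ - Z ω) * h ζ ∂P) =ᵐ[volume]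
      fun ζ => ∫ ω, gaussianPDFReal 0 1 (ζ - Z ω) * dZ ω ∂P :=
    integral_gaussianPDFReal_mul_ae_eq_of_setIntegral_preimage_eq hV hΓ measurable_fst
      one_ne_zero hind hlawΓ (hh.comp measurable_snd) (integrable_condExp.congr hfact)
      (measurable_snd.comp measurable_fst) hdZint
      fun A hA => setIntegral_comp_eq_of_condExp_comap_eq (hZm.add hΓ) hdZint hfact hA
  filter_upwards [(gaussianReal_absolutelyContinuous 0 one_ne_zero).ae_le hae] with ζ hζ
  rw [← hζ, integral_mul_const]
  exact (mul_div_cancel_left₀ _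
    (integral_gaussianPDFReal_comp_pos (hZm.const_sub ζ) 0 one_ne_zero).ne').symm

end
end

section
/- Let d = 1, let ΔZ ∈ L²(𝒢;ℝ) with E[ΔZ] = 0, and let R > 0. Then there exists ε = ε(R) ∈ (0,1) such that for every Z ∈ L²(𝒢;ℝ) with |Z| ≤ R almost surely, one has ‖E[ΔZ | Z + Γ]‖²_{L²} ≤ (1 − ε) ‖ΔZ‖²_{L²}. -/
open MeasureTheory ProbabilityTheory Filter Set
open scoped ENNReal InnerProductSpace Topology

noncomputable section

/-! Let `X = Z + Γ`. As `Γ` is independent of `(Z, ΔZ)`, `X` has density `p(x) = E φ(x - Z)` and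
`E[ΔZ | X] = (g / p)(X)` with `g(x) = E[ΔZ φ(x - Z)]`. When `|Z| ≤ R`, the density satisfies
`φ(x - Z) ≥ φ(|x| + R)`, and since `E ΔZ = 0` this lower bound can be subtracted inside `g` before
applying Cauchy–Schwarz: `g(x)² ≤ E[ΔZ² (φ(x - Z) - φ(|x| + R))] p(x)`. Dividing by `p(x)` and
integrating over `x` gives `‖E[ΔZ | X]‖² ≤ (1 - ε) ‖ΔZ‖²` with `ε = ∫ φ(|x| + R) dx`. -/

local notation "φ" => gaussianPDFReal 0 1

lemma gaussianPDFReal_le_of_sq_le (m : ℝ) (v : NNReal) {x y : ℝ} (h : (x - m) ^ 2 ≤ (y - m) ^ 2) :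
    gaussianPDFReal m v y ≤ gaussianPDFReal m v x := by
  simp only [gaussianPDFReal]
  gcongr

lemma gaussianPDFReal_lt_of_sq_lt (m : ℝ) {v : NNReal} (hv : v ≠ 0) {x y : ℝ}
    (h : (x - m) ^ 2 < (y - m) ^ 2) : gaussianPDFReal m v y < gaussianPDFReal m v x := by
  have hv' : (0 : ℝ) < v := by positivity
  simp only [gaussianPDFReal]
  gcongr

lemma gaussianPDFReal_le_self (m : ℝ) (v : NNReal) (x : ℝ) :
    gaussianPDFReal m v x ≤ gaussianPDFReal m v m :=
  gaussianPDFReal_le_of_sq_le m v (by simpa using sq_nonneg (x - m))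

lemma gaussianPDFReal_abs_add_le {R z : ℝ} (hz : |z| ≤ R) (x : ℝ) : φ (|x| + R) ≤ φ (x - z) :=
  gaussianPDFReal_le_of_sq_le 0 1 <| by
    rw [sub_zero, sub_zero, ← sq_abs]
    gcongr
    exact (abs_sub x z).trans (by linarith)

/-- The mass `P(|Γ| > R)` of the minorant `x ↦ φ (|x| + R)` of all the densities `φ (· - z)`,
`|z| ≤ R`. -/
def gaussianGap (R : ℝ) : ℝ := ∫ x, φ (|x| + R)

lemma integrable_gaussianPDFReal_abs_add {R : ℝ} (hR : 0 ≤ R) :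
    Integrable (fun x => φ (|x| + R)) :=
  (integrable_gaussianPDFReal 0 1).mono'
    ((measurable_gaussianPDFReal 0 1).comp (measurable_abs.add_const R)).aestronglyMeasurable
    (ae_of_all _ fun x => by
      simpa [Real.norm_of_nonneg (gaussianPDFReal_nonneg 0 1 _)] using
        gaussianPDFReal_abs_add_le (z := 0) (by simpa using hR) x)

lemma gaussianGap_pos {R : ℝ} (hR : 0 ≤ R) : 0 < gaussianGap R := by
  refine (integral_pos_iff_support_of_nonneg (fun x => gaussianPDFReal_nonneg 0 1 _)
    (integrable_gaussianPDFReal_abs_add hR)).2 ?_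
  rw [Function.support_eq_univ fun x => (gaussianPDFReal_pos 0 1 _ one_ne_zero).ne']
  simp

lemma gaussianGap_lt_one {R : ℝ} (hR : 0 < R) : gaussianGap R < 1 := by
  have hlt : ∀ x, φ (|x| + R) < φ x := fun x =>
    gaussianPDFReal_lt_of_sq_lt 0 one_ne_zero (by
      simp only [sub_zero]
      nlinarith [sq_abs x, abs_nonneg x])
  have hpos : 0 < ∫ x, (φ x - φ (|x| + R)) := by
    refine (integral_pos_iff_support_of_nonneg (fun x => sub_nonneg.2 (hlt x).le)
      ((integrable_gaussianPDFReal 0 1).sub (integrable_gaussianPDFReal_abs_add hR.le))).2 ?_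
    rw [Function.support_eq_univ fun x => (sub_pos.2 (hlt x)).ne']
    simp
  rw [integral_sub (integrable_gaussianPDFReal 0 1) (integrable_gaussianPDFReal_abs_add hR.le),
    integral_gaussianPDFReal_eq_one 0 one_ne_zero] at hpos
  exact sub_pos.1 hpos

section CauchySchwarz

variable {α : Type*} [MeasurableSpace α] {μ : Measure α}

lemma sq_integral_mul_le_integral_sq_mul_mul_integral {a u : α → ℝ} (hu : 0 ≤ᵐ[μ] u)
    (hu_int : Integrable u μ) (hau : Integrable (fun x => a x * u x) μ)
    (ha2u : Integrable (fun x => a x ^ 2 * u x) μ) :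
    (∫ x, a x * u x ∂μ) ^ 2 ≤ (∫ x, a x ^ 2 * u x ∂μ) * ∫ x, u x ∂μ := by
  have hquad : ∀ t : ℝ, 0 ≤ (∫ x, u x ∂μ) * (t * t) + (2 * ∫ x, a x * u x ∂μ) * t
      + ∫ x, a x ^ 2 * u x ∂μ := by
    intro t
    have h0 : 0 ≤ ∫ x, t * t * u x + 2 * t * (a x * u x) + a x ^ 2 * u x ∂μ := by
      refine integral_nonneg_of_ae ?_
      filter_upwards [hu] with x hx
      simp only [Pi.zero_apply] at hx ⊢
      nlinarith [mul_nonneg (sq_nonneg (t + a x)) hx]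
    rw [integral_add (f := fun x => t * t * u x + 2 * t * (a x * u x))
        ((hu_int.const_mul _).add (hau.const_mul _)) ha2u,
      integral_add (hu_int.const_mul _) (hau.const_mul _), integral_const_mul,
      integral_const_mul] at h0
    linarith
  have hdisc := discrim_le_zero hquad
  rw [discrim] at hdisc
  nlinarith [hdisc]

lemma sq_integral_mul_le_of_integral_eq_zero [IsFiniteMeasure μ] {y u : α → ℝ} {c C : ℝ}
    (hy : MemLp y 2 μ) (hy0 : ∫ x, y x ∂μ = 0) (hu : AEStronglyMeasurable u μ)
    (hcu : ∀ᵐ x ∂μ, c ≤ u x) (huC : ∀ᵐ x ∂μ, u x ≤ C) (hc : 0 ≤ c) :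
    (∫ x, y x * u x ∂μ) ^ 2 ≤ (∫ x, y x ^ 2 * u x ∂μ - c * ∫ x, y x ^ 2 ∂μ) * ∫ x, u x ∂μ := by
  set v : α → ℝ := fun x => u x - c
  have hv_bound : ∀ᵐ x ∂μ, ‖v x‖ ≤ C - c := by
    filter_upwards [hcu, huC] with x h1 h2
    rw [Real.norm_of_nonneg (sub_nonneg.2 h1)]
    linarith
  have hv_meas : AEStronglyMeasurable v μ := hu.sub aestronglyMeasurable_const
  have hy_int : Integrable y μ := hy.integrable one_le_two
  have hy2_int : Integrable (fun x => y x ^ 2) μ := hy.integrable_sq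
  have hv_nonneg : 0 ≤ᵐ[μ] v := hcu.mono fun x hx => sub_nonneg.2 hx
  have hv_int : Integrable v μ := Integrable.of_bound hv_meas _ hv_bound
  have hu_int : Integrable u μ := (hv_int.add (integrable_const c)).congr
    (ae_of_all _ fun x => sub_add_cancel (u x) c)
  have hyv_int := hy_int.mul_bdd hv_meas hv_bound
  have hy2v_int := hy2_int.mul_bdd hv_meas hv_bound
  have hyu_int : Integrable (fun x => y x * u x) μ := (hyv_int.add (hy_int.mul_const c)).congr
    (ae_of_all _ fun x => by simp only [v, Pi.add_apply]; ring)
  have hy2u_int : Integrable (fun x => y x ^ 2 * u x) μ :=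
    (hy2v_int.add (hy2_int.mul_const c)).congr
      (ae_of_all _ fun x => by simp only [v, Pi.add_apply]; ring)
  have hcs := sq_integral_mul_le_integral_sq_mul_mul_integral hv_nonneg hv_int hyv_int hy2v_int
  have hyv : ∫ x, y x * v x ∂μ = ∫ x, y x * u x ∂μ := by
    simp only [v, mul_sub, integral_sub hyu_int (hy_int.mul_const c), integral_mul_const, hy0,
      zero_mul, sub_zero]
  have hy2v : ∫ x, y x ^ 2 * v x ∂μ = ∫ x, y x ^ 2 * u x ∂μ - c * ∫ x, y x ^ 2 ∂μ := by
    simp only [v, mul_sub, integral_sub hy2u_int (hy2_int.mul_const c), integral_mul_const]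
    ring
  have hv : ∫ x, v x ∂μ ≤ ∫ x, u x ∂μ := by
    simp only [v, integral_sub hu_int (integrable_const c), integral_const, smul_eq_mul]
    nlinarith [measureReal_nonneg (μ := μ) (s := Set.univ)]
  have hA : 0 ≤ ∫ x, y x ^ 2 * v x ∂μ :=
    integral_nonneg_of_ae (hv_nonneg.mono fun x hx => mul_nonneg (sq_nonneg _) hx)
  rw [hyv, hy2v] at hcs
  rw [hy2v] at hA
  exact hcs.trans (mul_le_mul_of_nonneg_left hv hA)

end CauchySchwarz

lemma integral_gaussianReal_const_add (c : ℝ) (k : ℝ → ℝ) :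
    ∫ γ, k (c + γ) ∂gaussianReal 0 1 = ∫ x, φ (x - c) * k x := by
  rw [integral_gaussianReal_eq_integral_smul one_ne_zero,
    ← integral_add_left_eq_self (μ := volume) (fun x => φ (x - c) * k x) c]
  simp only [smul_eq_mul, add_sub_cancel_left]

lemma integral_gaussianPDFReal_sub (c : ℝ) : ∫ x, φ (x - c) = 1 := by
  rw [integral_sub_right_eq_self (fun x => φ x) c, integral_gaussianPDFReal_eq_one 0 one_ne_zero]

-- With `μ` the law of `(Z, ΔZ)`, `p = gaussSmooth μ 1` and `g = gaussSmooth μ (·.2)`.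
def gaussSmooth (μ : Measure (ℝ × ℝ)) (a : ℝ × ℝ → ℝ) (x : ℝ) : ℝ :=
  ∫ w, a w * φ (x - w.1) ∂μ

section GaussSmooth

variable {μ : Measure (ℝ × ℝ)} {a : ℝ × ℝ → ℝ}

lemma measurable_gaussSmooth [SFinite μ] (ha : Measurable a) : Measurable (gaussSmooth μ a) :=
  (StronglyMeasurable.integral_prod_right' (f := fun z : ℝ × (ℝ × ℝ) => a z.2 * φ (z.1 - z.2.1))
    (by fun_prop)).measurable

lemma integrable_mul_gaussianPDFReal_sub_fst [SFinite μ] (ha : Integrable a μ) :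
    Integrable (fun y : (ℝ × ℝ) × ℝ => a y.1 * φ (y.2 - y.1.1)) (μ.prod volume) := by
  refine (integrable_prod_iff (ha.aestronglyMeasurable.comp_fst.mul
    (by fun_prop : Measurable _).aestronglyMeasurable)).2
    ⟨ae_of_all _ fun w => (((integrable_gaussianPDFReal 0 1).comp_sub_right w.1).const_mul (a w)),
      ?_⟩
  simpa only [Pi.mul_apply, norm_mul, Real.norm_of_nonneg (gaussianPDFReal_nonneg 0 1 _),
    integral_const_mul, integral_gaussianPDFReal_sub, mul_one] using ha.norm

lemma integrable_gaussSmooth [SFinite μ] (ha : Integrable a μ) : Integrable (gaussSmooth μ a) :=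
  (integrable_mul_gaussianPDFReal_sub_fst ha).swap.integral_prod_left

lemma integral_gaussSmooth [SFinite μ] (ha : Integrable a μ) :
    ∫ x, gaussSmooth μ a x = ∫ w, a w ∂μ := by
  simp only [gaussSmooth]
  rw [integral_integral_swap (f := fun (x : ℝ) (w : ℝ × ℝ) => a w * φ (x - w.1))
    (integrable_mul_gaussianPDFReal_sub_fst ha).swap]
  simp only [integral_const_mul, integral_gaussianPDFReal_sub, mul_one]

lemma gaussSmooth_one_pos [IsFiniteMeasure μ] [NeZero μ] (x : ℝ) : 0 < gaussSmooth μ 1 x := by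
  have hint : Integrable (fun w : ℝ × ℝ => φ (x - w.1)) μ :=
    Integrable.of_bound (by fun_prop : Measurable _).aestronglyMeasurable (φ 0)
      (ae_of_all _ fun w => by
        simpa [Real.norm_of_nonneg (gaussianPDFReal_nonneg 0 1 _)] using
          gaussianPDFReal_le_self 0 1 (x - w.1))
  simp only [gaussSmooth, Pi.one_apply, one_mul]
  refine (integral_pos_iff_support_of_nonneg (fun w => gaussianPDFReal_nonneg 0 1 _) hint).2 ?_
  rw [Function.support_eq_univ fun w => (gaussianPDFReal_pos 0 1 _ one_ne_zero).ne']
  exact Measure.measure_univ_pos.2 (NeZero.ne μ)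

lemma setIntegral_prod_gaussianReal_add_mem [IsFiniteMeasure μ] (ha : Integrable a μ) {t : Set ℝ}
    (ht : MeasurableSet t) :
    ∫ y in {y : (ℝ × ℝ) × ℝ | y.1.1 + y.2 ∈ t}, a y.1 ∂(μ.prod (gaussianReal 0 1))
      = ∫ x in t, gaussSmooth μ a x := by
  have hS : MeasurableSet {y : (ℝ × ℝ) × ℝ | y.1.1 + y.2 ∈ t} :=
    (measurable_fst.fst.add measurable_snd) ht
  rw [← integral_indicator hS, integral_prod _ ((ha.comp_fst _).indicator hS)]
  have hinner : ∀ w : ℝ × ℝ, ∫ γ, {y : (ℝ × ℝ) × ℝ | y.1.1 + y.2 ∈ t}.indicator (fun y => a y.1)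
      (w, γ) ∂gaussianReal 0 1 = ∫ x in t, a w * φ (x - w.1) := by
    intro w
    have hmul : ∀ x, φ (x - w.1) * t.indicator (fun _ => a w) x
        = t.indicator (fun x => a w * φ (x - w.1)) x := by
      intro x
      by_cases h : x ∈ t <;> simp [h, mul_comm]
    change ∫ γ, t.indicator (fun _ => a w) (w.1 + γ) ∂gaussianReal 0 1 = _
    rw [integral_gaussianReal_const_add, ← integral_indicator ht]
    simp only [hmul]
  simp only [hinner, gaussSmooth]
  refine integral_integral_swap ?_
  rw [← Measure.restrict_univ (μ := μ), Measure.prod_restrict]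
  exact (integrable_mul_gaussianPDFReal_sub_fst ha).restrict

lemma map_prod_gaussianReal_add_eq_withDensity [IsFiniteMeasure μ] :
    (μ.prod (gaussianReal 0 1)).map (fun y => y.1.1 + y.2)
      = volume.withDensity fun x => ENNReal.ofReal (gaussSmooth μ 1 x) := by
  ext t ht
  have h := setIntegral_prod_gaussianReal_add_mem (μ := μ) (a := 1) (integrable_const (1 : ℝ)) ht
  simp only [Pi.one_apply, setIntegral_const, smul_eq_mul, mul_one] at h
  rw [Measure.map_apply (by fun_prop) ht, withDensity_apply _ ht, ← ofReal_measureReal]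
  refine (congrArg ENNReal.ofReal h).trans ?_
  exact ofReal_integral_eq_lintegral_ofReal
    (integrable_gaussSmooth (μ := μ) (integrable_const 1)).integrableOn
    (ae_of_all _ fun x => integral_nonneg fun w => by simp [gaussianPDFReal_nonneg])

end GaussSmooth

section WithDensityOfReal

variable {α : Type*} [MeasurableSpace α] {ν : Measure α} {p : α → ℝ}

lemma integral_withDensity_ofReal_s18 (hp : Measurable p) (hp0 : ∀ x, 0 ≤ p x) (f : α → ℝ) :
    ∫ x, f x ∂ν.withDensity (fun x => ENNReal.ofReal (p x)) = ∫ x, p x * f x ∂ν := by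
  rw [integral_withDensity_eq_integral_toReal_smul hp.ennreal_ofReal
    (ae_of_all _ fun _ => ENNReal.ofReal_lt_top)]
  simp only [ENNReal.toReal_ofReal (hp0 _), smul_eq_mul]

lemma integrable_withDensity_ofReal_iff (hp : Measurable p) (hp0 : ∀ x, 0 ≤ p x) {f : α → ℝ} :
    Integrable f (ν.withDensity fun x => ENNReal.ofReal (p x)) ↔
      Integrable (fun x => f x * p x) ν := by
  rw [integrable_withDensity_iff hp.ennreal_ofReal (ae_of_all _ fun _ => ENNReal.ofReal_lt_top)]
  simp only [ENNReal.toReal_ofReal (hp0 _)]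

end WithDensityOfReal

section Estimate

variable {μ : Measure (ℝ × ℝ)} [IsProbabilityMeasure μ] {R : ℝ}

lemma sq_gaussSmooth_snd_div_le (hR : ∀ᵐ w ∂μ, |w.1| ≤ R) (hY : MemLp (fun w => w.2) 2 μ)
    (hY0 : ∫ w, w.2 ∂μ = 0) (x : ℝ) :
    gaussSmooth μ (fun w => w.2) x ^ 2 / gaussSmooth μ 1 x
      ≤ gaussSmooth μ (fun w => w.2 ^ 2) x - φ (|x| + R) * ∫ w, w.2 ^ 2 ∂μ := by
  have h := sq_integral_mul_le_of_integral_eq_zero (y := fun w : ℝ × ℝ => w.2)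
    (u := fun w => φ (x - w.1)) (c := φ (|x| + R)) (C := φ 0) hY hY0
    (by fun_prop : Measurable _).aestronglyMeasurable
    (hR.mono fun w hw => gaussianPDFReal_abs_add_le hw x)
    (ae_of_all _ fun w => gaussianPDFReal_le_self 0 1 _) (gaussianPDFReal_nonneg 0 1 _)
  rw [div_le_iff₀ (gaussSmooth_one_pos x)]
  simpa only [gaussSmooth, Pi.one_apply, one_mul] using h

lemma integral_sq_gaussSmooth_snd_div_le (hR : ∀ᵐ w ∂μ, |w.1| ≤ R)
    (hY : MemLp (fun w => w.2) 2 μ) (hY0 : ∫ w, w.2 ∂μ = 0) :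
    ∫ x, gaussSmooth μ (fun w => w.2) x ^ 2 / gaussSmooth μ 1 x
      ≤ (1 - gaussianGap R) * ∫ w, w.2 ^ 2 ∂μ := by
  obtain ⟨z, hz⟩ := hR.exists
  have hR0 : 0 ≤ R := (abs_nonneg _).trans hz
  have hY2 := integrable_gaussSmooth (μ := μ) hY.integrable_sq
  have hgap := (integrable_gaussianPDFReal_abs_add hR0).mul_const (∫ w, w.2 ^ 2 ∂μ)
  calc ∫ x, gaussSmooth μ (fun w => w.2) x ^ 2 / gaussSmooth μ 1 x
      ≤ ∫ x, gaussSmooth μ (fun w => w.2 ^ 2) x - φ (|x| + R) * ∫ w, w.2 ^ 2 ∂μ :=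
        integral_mono_of_nonneg
          (ae_of_all _ fun x => div_nonneg (sq_nonneg _) (gaussSmooth_one_pos x).le)
          (hY2.sub hgap) (ae_of_all _ (sq_gaussSmooth_snd_div_le hR hY hY0))
    _ = (1 - gaussianGap R) * ∫ w, w.2 ^ 2 ∂μ := by
        rw [integral_sub hY2 hgap, integral_gaussSmooth hY.integrable_sq, integral_mul_const,
          gaussianGap]
        ring

end Estimate

section AddGaussian

variable {Ω : Type*} [mΩ : MeasurableSpace Ω] {P : Measure Ω} [IsProbabilityMeasure P]
  {W : Ω → ℝ × ℝ} {Γ : Ω → ℝ}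

lemma map_prod_eq_prod_gaussianReal (hW : Measurable W) (hΓ : Measurable Γ)
    (hlawΓ : P.map Γ = gaussianReal 0 1) (hind : IndepFun W Γ P) :
    P.map (fun ω => (W ω, Γ ω)) = (P.map W).prod (gaussianReal 0 1) := by
  rw [← hlawΓ]
  exact (indepFun_iff_map_prod_eq_prod_map_map hW.aemeasurable hΓ.aemeasurable).1 hind

lemma map_fst_add_eq_withDensity (hW : Measurable W) (hΓ : Measurable Γ)
    (hlawΓ : P.map Γ = gaussianReal 0 1) (hind : IndepFun W Γ P) :
    P.map (fun ω => (W ω).1 + Γ ω)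
      = volume.withDensity fun x => ENNReal.ofReal (gaussSmooth (P.map W) 1 x) := by
  rw [← map_prod_gaussianReal_add_eq_withDensity, ← map_prod_eq_prod_gaussianReal hW hΓ hlawΓ hind,
    Measure.map_map (by fun_prop) (hW.prodMk hΓ)]
  rfl

lemma condExp_snd_ae_eq_gaussSmooth_div (hW : Measurable W) (hΓ : Measurable Γ)
    (hlawΓ : P.map Γ = gaussianReal 0 1) (hind : IndepFun W Γ P)
    (hY : Integrable (fun ω => (W ω).2) P) :
    P[fun ω => (W ω).2 | sigmaGen fun ω => (W ω).1 + Γ ω] =ᵐ[P]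
      fun ω => gaussSmooth (P.map W) (fun w => w.2) ((W ω).1 + Γ ω)
        / gaussSmooth (P.map W) 1 ((W ω).1 + Γ ω) := by
  set X : Ω → ℝ := fun ω => (W ω).1 + Γ ω
  set μ := P.map W
  have : IsProbabilityMeasure μ := Measure.isProbabilityMeasure_map hW.aemeasurable
  have hX : Measurable X := by fun_prop
  have hYμ : Integrable (fun w : ℝ × ℝ => w.2) μ :=
    (integrable_map_measure (by fun_prop) hW.aemeasurable).2 hY
  set p := gaussSmooth μ 1
  set g := gaussSmooth μ fun w => w.2
  have hp : Measurable p := measurable_gaussSmooth measurable_const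
  have hp0 : ∀ x, 0 ≤ p x := fun x => (gaussSmooth_one_pos x).le
  have hq : Measurable (g / p) := (measurable_gaussSmooth measurable_snd).div hp
  have hqp : ∀ x, (g / p) x * p x = g x := fun x => div_mul_cancel₀ _ (gaussSmooth_one_pos x).ne'
  have hlawX := map_fst_add_eq_withDensity hW hΓ hlawΓ hind
  have hqX : Integrable (fun ω => (g / p) (X ω)) P := by
    refine (integrable_map_measure hq.aestronglyMeasurable hX.aemeasurable).1 ?_
    rw [hlawX, integrable_withDensity_ofReal_iff hp hp0]
    simpa only [hqp] using integrable_gaussSmooth hYμ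
  have hm : sigmaGen X ≤ mΩ := hX.comap_le
  refine (ae_eq_condExp_of_forall_setIntegral_eq hm hY (fun _ _ _ => hqX.integrableOn) ?_
    (hq.comp (comap_measurable X)).aestronglyMeasurable).symm
  rintro _ ⟨t, ht, rfl⟩ -
  calc ∫ ω in X ⁻¹' t, (g / p) (X ω) ∂P
      = ∫ x in t, (g / p) x ∂P.map X :=
        (setIntegral_map ht hq.aestronglyMeasurable hX.aemeasurable).symm
    _ = ∫ x in t, g x := by
        rw [hlawX, restrict_withDensity ht, integral_withDensity_ofReal_s18 hp hp0]
        simp only [mul_comm (p _), hqp]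
    _ = ∫ y in {y : (ℝ × ℝ) × ℝ | y.1.1 + y.2 ∈ t}, y.1.2 ∂P.map (fun ω => (W ω, Γ ω)) := by
        rw [map_prod_eq_prod_gaussianReal hW hΓ hlawΓ hind,
          setIntegral_prod_gaussianReal_add_mem hYμ ht]
    _ = ∫ ω in X ⁻¹' t, (W ω).2 ∂P :=
        setIntegral_map ((measurable_fst.fst.add measurable_snd) ht) (by fun_prop)
          (hW.prodMk hΓ).aemeasurable

lemma integral_sq_condExp_snd_eq (hW : Measurable W) (hΓ : Measurable Γ)
    (hlawΓ : P.map Γ = gaussianReal 0 1) (hind : IndepFun W Γ P)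
    (hY : Integrable (fun ω => (W ω).2) P) :
    ∫ ω, (P[fun ω => (W ω).2 | sigmaGen fun ω => (W ω).1 + Γ ω]) ω ^ 2 ∂P
      = ∫ x, gaussSmooth (P.map W) (fun w => w.2) x ^ 2 / gaussSmooth (P.map W) 1 x := by
  have : IsProbabilityMeasure (P.map W) := Measure.isProbabilityMeasure_map hW.aemeasurable
  have hp : Measurable (gaussSmooth (P.map W) 1) := measurable_gaussSmooth measurable_const
  have hq : Measurable fun x =>
      gaussSmooth (P.map W) (fun w => w.2) x / gaussSmooth (P.map W) 1 x :=
    (measurable_gaussSmooth measurable_snd).div hp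
  rw [integral_congr_ae ((condExp_snd_ae_eq_gaussSmooth_div hW hΓ hlawΓ hind hY).mono
      fun ω h => congrArg (· ^ 2) h),
    ← integral_map (f := fun x => (gaussSmooth (P.map W) (fun w => w.2) x
      / gaussSmooth (P.map W) 1 x) ^ 2) (by fun_prop) (hq.pow_const 2).aestronglyMeasurable,
    map_fst_add_eq_withDensity hW hΓ hlawΓ hind,
    integral_withDensity_ofReal_s18 hp fun x => (gaussSmooth_one_pos x).le]
  congr 1 with x
  field_simp [(gaussSmooth_one_pos (μ := P.map W) x).ne']

end AddGaussian

/-- Lemma 4.4 / `lem:reverse_ineq`. Let `d = 1`, `ΔZ ∈ L²(𝒢; ℝ)` with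
`E[ΔZ] = 0` and `R > 0`. Then there is `ε = ε(R) ∈ (0,1)` such that for every `Z ∈ L²(𝒢; ℝ)`
with `|Z| ≤ R` a.s. one has `‖E[ΔZ | Z + Γ]‖²_{L²} ≤ (1 − ε) ‖ΔZ‖²_{L²}`. -/
theorem statement18
    {Ω : Type*} [mΩ : MeasurableSpace Ω] {P : Measure Ω} [IsProbabilityMeasure P]
    (Γ : Ω → ℝ) (hΓ : Measurable Γ) (hlawΓ : P.map Γ = gaussianReal 0 1)
    (mG : MeasurableSpace Ω) (hmG : mG ≤ mΩ)
    (hindep : Indep (sigmaGen Γ) mG P)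
    (dZ : Ω → ℝ) (hdZ : MemL2Meas P mG dZ) (hmean : (∫ ω, dZ ω ∂P) = 0)
    (R : ℝ) (hR : 0 < R) :
    ∃ ε ∈ Set.Ioo (0:ℝ) 1, ∀ Z : Ω → ℝ, MemL2Meas P mG Z → (∀ᵐ ω ∂P, |Z ω| ≤ R) →
      (∫ ω, (P[dZ|sigmaGen (fun ω' => Z ω' + Γ ω')]) ω ^ 2 ∂P) ≤
        (1 - ε) * ∫ ω, dZ ω ^ 2 ∂P := by
  refine ⟨gaussianGap R, ⟨gaussianGap_pos hR.le, gaussianGap_lt_one hR⟩, fun Z hZ hZR => ?_⟩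
  -- otherwise the local instance `mG` would be found instead of `mΩ`
  let _ : MeasurableSpace Ω := mΩ
  set W : Ω → ℝ × ℝ := fun ω => (Z ω, dZ ω)
  have hWG : Measurable[mG] W := hZ.1.prodMk hdZ.1
  have hW : Measurable W := hWG.mono hmG le_rfl
  have hind : IndepFun W Γ P := by
    rw [IndepFun_iff_Indep]
    exact indep_of_indep_of_le_left hindep.symm hWG.comap_le
  have : IsProbabilityMeasure (P.map W) := Measure.isProbabilityMeasure_map hW.aemeasurable
  have hYμ : MemLp (fun w : ℝ × ℝ => w.2) 2 (P.map W) :=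
    (memLp_map_measure_iff (by fun_prop) hW.aemeasurable).2 hdZ.2
  calc ∫ ω, (P[dZ|sigmaGen (fun ω' => Z ω' + Γ ω')]) ω ^ 2 ∂P
      = ∫ x, gaussSmooth (P.map W) (fun w => w.2) x ^ 2 / gaussSmooth (P.map W) 1 x :=
        integral_sq_condExp_snd_eq hW hΓ hlawΓ hind (hdZ.2.integrable one_le_two)
    _ ≤ (1 - gaussianGap R) * ∫ w, w.2 ^ 2 ∂P.map W :=
        integral_sq_gaussSmooth_snd_div_le
          ((ae_map_iff hW.aemeasurable (measurableSet_le (by fun_prop) (by fun_prop))).2 hZR)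
          hYμ (by rwa [integral_map hW.aemeasurable (by fun_prop)])
    _ = (1 - gaussianGap R) * ∫ ω, dZ ω ^ 2 ∂P := by
        rw [integral_map hW.aemeasurable (by fun_prop)]
end
end
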